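/- For every odd n ≥ 3, a_n(μ) = (a_{(n+1)/2}(μ) − a_{(n−3)/2}(μ)) · a_{(n−1)/2}(μ). -/

import Mathlib

noncomputable def a (μ : ℝ) : ℕ → ℝ
  | 0 => 1
  | 1 => 2 * (1 - μ)
  | n + 2 => 2 * (1 - μ) * a μ (n + 1) - a μ n

/-- `a μ n = U_n(1 - μ)` is a Chebyshev polynomial of the second kind, and this is its addition
formula; for fixed `m` both sides satisfy the defining recurrence in `k`. -/
lemma a_add_add_two (μ : ℝ) (m k : ℕ) :
    a μ (m + k + 2) = a μ (m + 1) * a μ (k + 1) - a μ m * a μ k := by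
  induction k using Nat.twoStepInduction with
  | zero => simp only [a]; ring
  | one => simp only [a]; ring
  | more k ih₀ ih₁ =>
    calc a μ (m + (k + 2) + 2)
        = 2 * (1 - μ) * a μ (m + (k + 1) + 2) - a μ (m + k + 2) := a.eq_3 μ (m + k + 2)
      _ = a μ (m + 1) * (2 * (1 - μ) * a μ (k + 2) - a μ (k + 1))
            - a μ m * (2 * (1 - μ) * a μ (k + 1) - a μ k) := by rw [ih₀, ih₁]; ring
      _ = a μ (m + 1) * a μ (k + 2 + 1) - a μ m * a μ (k + 2) := rfl

theorem stmt6 (n : ℕ) (hn : 3 ≤ n) (hodd : Odd n) (μ : ℝ) :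
    a μ n = (a μ ((n + 1) / 2) - a μ ((n - 3) / 2)) * a μ ((n - 1) / 2) := by
  obtain ⟨m, rfl⟩ : ∃ m, n = 2 * m + 3 := by
    obtain ⟨l, rfl⟩ := hodd
    exact ⟨l - 1, by omega⟩
  rw [show (2 * m + 3 + 1) / 2 = m + 2 by omega, show (2 * m + 3 - 3) / 2 = m by omega,
    show (2 * m + 3 - 1) / 2 = m + 1 by omega, show 2 * m + 3 = m + 1 + m + 2 by ring,
    a_add_add_two]
  ring
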